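/- For every λ ∈ ℂ \ [−1,1], with β = β(λ), one has (1/(2π)) ∫_{−π/2}^{3π/2} |exp(β·Log(i·tan(θ/2 − π/4)))|² dθ ≤ 3·e^{π|Im β|}·π^{1 − 2|Re β|}/(1 − 2|Re β|). (The integrand is defined for all θ in the range except θ = ±π/2, 3π/2, since i·tan(θ/2 − π/4) is then a nonzero purely imaginary number, which avoids the branch cut of Log.) -/

import Mathlib

/-!
Write `a = |Re β|`. Since `Re β = arg ((λ+1)/(λ-1)) / (2π)` and the argument equals `π` only
for `λ ∈ [-1, 1]`, we have `a < 1/2`. After the substitution `φ = θ/2 - π/4` the integrand is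
`‖(i tan φ)^β‖² ≤ e^{π |Im β|} |tan φ|^{2 Re β} ≤ e^{π |Im β|} (|tan φ|^{2a} + |tan φ|^{-2a})`,
and `|φ| ≤ |tan φ| ≤ (π/2 - |φ|)⁻¹` dominates this by
`e^{π |Im β|} ((π/2 - |φ|)^{-2a} + |φ|^{-2a})`, which is integrable on `(-π/2, π/2)` precisely
because `2a < 1`, with integral `4 e^{π |Im β|} (π/2)^{1-2a} / (1-2a)`.
-/

/-- `β(λ) = (1/(2πi))·Log((λ+1)/(λ−1))`, with the principal branch of `Log`. -/
noncomputable def betaFn (lam : ℂ) : ℂ :=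
  (1 / (2 * (Real.pi : ℂ) * Complex.I)) * Complex.log ((lam + 1) / (lam - 1))

open Real MeasureTheory Set

lemma re_betaFn (lam : ℂ) :
    (betaFn lam).re = Complex.arg ((lam + 1) / (lam - 1)) / (2 * π) := by
  have hinv : 1 / (2 * (π : ℂ) * Complex.I) = -Complex.I * ((2 * π)⁻¹ : ℝ) := by
    have hπ : (π : ℂ) ≠ 0 := by exact_mod_cast pi_ne_zero
    push_cast
    field_simp
    rw [Complex.I_sq]
    ring
  rw [betaFn, hinv]
  simp [Complex.mul_re, Complex.log_im, div_eq_mul_inv, mul_comm]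

lemma arg_add_one_div_sub_one_ne_pi {lam : ℂ} (hlam : lam ∉ Complex.ofReal '' Icc (-1 : ℝ) 1) :
    Complex.arg ((lam + 1) / (lam - 1)) ≠ π := by
  intro h
  obtain ⟨hre, him⟩ := Complex.arg_eq_pi_iff.1 h
  have hlam1 : lam - 1 ≠ 0 := by
    intro h1
    simp [h1] at hre
  set r := ((lam + 1) / (lam - 1)).re
  have hr : (lam + 1) / (lam - 1) = r := Complex.ext rfl (by simpa using him)
  apply hlam
  refine ⟨(r + 1) / (r - 1), ⟨?_, ?_⟩, ?_⟩
  · rw [le_div_iff_of_neg (by linarith)]; linarith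
  · rw [div_le_one_of_neg (by linarith)]; linarith
  · rw [div_eq_iff hlam1] at hr
    have hr1 : (r : ℂ) - 1 ≠ 0 := by exact_mod_cast (by linarith : r - 1 ≠ 0)
    push_cast
    rw [div_eq_iff hr1]
    linear_combination hr

lemma abs_re_betaFn_lt_half {lam : ℂ} (hlam : lam ∉ Complex.ofReal '' Icc (-1 : ℝ) 1) :
    |(betaFn lam).re| < 1 / 2 := by
  have hlt := (Complex.arg_le_pi _).lt_of_ne (arg_add_one_div_sub_one_ne_pi hlam)
  have hgt := Complex.neg_pi_lt_arg ((lam + 1) / (lam - 1))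
  rw [re_betaFn, abs_div, abs_of_pos (by positivity : (0 : ℝ) < 2 * π),
    div_lt_iff₀ (by positivity), abs_lt]
  constructor <;> linarith

section EvenIntegral

variable {E : Type*} [NormedAddCommGroup E] {f : ℝ → E} {s : ℝ}

lemma IntervalIntegrable.comp_abs_left_half (hf : IntervalIntegrable f volume 0 s) (hs : 0 ≤ s) :
    IntervalIntegrable (fun x => f |x|) volume (-s) 0 := by
  have hneg : IntervalIntegrable (fun x => f (-x)) volume (-s) 0 := by
    simpa using ((IntervalIntegrable.iff_comp_neg (f := f)).mp hf).symm
  refine hneg.congr fun x hx => ?_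
  rw [uIoc_of_le (neg_nonpos.2 hs)] at hx
  simp [abs_of_nonpos hx.2]

lemma IntervalIntegrable.comp_abs_right_half (hf : IntervalIntegrable f volume 0 s) (hs : 0 ≤ s) :
    IntervalIntegrable (fun x => f |x|) volume 0 s :=
  hf.congr fun x hx => by
    rw [uIoc_of_le hs] at hx
    simp [abs_of_pos hx.1]

lemma IntervalIntegrable.comp_abs (hf : IntervalIntegrable f volume 0 s) (hs : 0 ≤ s) :
    IntervalIntegrable (fun x => f |x|) volume (-s) s :=
  (hf.comp_abs_left_half hs).trans (hf.comp_abs_right_half hs)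

lemma intervalIntegral.integral_comp_abs_symm [NormedSpace ℝ E]
    (hf : IntervalIntegrable f volume 0 s) (hs : 0 ≤ s) :
    ∫ x in (-s)..s, f |x| = (2 : ℝ) • ∫ x in 0..s, f x := by
  rw [← intervalIntegral.integral_add_adjacent_intervals (hf.comp_abs_left_half hs)
    (hf.comp_abs_right_half hs)]
  have hneg : ∫ x in (-s)..0, f |x| = ∫ x in (-s)..0, f (-x) :=
    intervalIntegral.integral_congr fun x hx => by
      rw [uIcc_of_le (neg_nonpos.2 hs)] at hx
      rw [abs_of_nonpos hx.2]
  have hpos : ∫ x in 0..s, f |x| = ∫ x in 0..s, f x :=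
    intervalIntegral.integral_congr fun x hx => by
      rw [uIcc_of_le hs] at hx
      rw [abs_of_nonneg hx.1]
  rw [hneg, hpos, intervalIntegral.integral_comp_neg, neg_zero, neg_neg, two_smul]

end EvenIntegral

section RpowIntegral

variable {r s : ℝ}

lemma intervalIntegrable_sub_rpow_add_rpow (hr : -1 < r) :
    IntervalIntegrable (fun x => (s - x) ^ r + x ^ r) volume 0 s := by
  have hint := intervalIntegral.intervalIntegrable_rpow' (a := 0) (b := s) hr
  have hsub : IntervalIntegrable (fun x => (s - x) ^ r) volume 0 s := by
    simpa using (hint.comp_sub_left s).symm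
  exact hsub.add hint

lemma integral_sub_rpow_add_rpow (hr : -1 < r) :
    ∫ x in 0..s, ((s - x) ^ r + x ^ r) = 2 * s ^ (r + 1) / (r + 1) := by
  have hint := intervalIntegral.intervalIntegrable_rpow' (a := 0) (b := s) hr
  rw [intervalIntegral.integral_add (by simpa using (hint.comp_sub_left s).symm) hint,
    intervalIntegral.integral_comp_sub_left (fun x => x ^ r), sub_self, sub_zero,
    integral_rpow (Or.inl hr), zero_rpow (by linarith)]
  ring

end RpowIntegral

lemma Real.rpow_le_rpow_abs_add_rpow_neg_abs {x : ℝ} (hx : 0 < x) (y : ℝ) :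
    x ^ y ≤ x ^ |y| + x ^ (-|y|) := by
  rcases le_or_gt 1 x with h1 | h1
  · linarith [rpow_le_rpow_of_exponent_le h1 (le_abs_self y), rpow_nonneg hx.le (-|y|)]
  · linarith [rpow_le_rpow_of_exponent_ge hx h1.le (neg_abs_le y), rpow_nonneg hx.le |y|]

lemma Real.abs_tan_eq_tan_abs {x : ℝ} (hx : |x| < π / 2) : |tan x| = tan |x| := by
  rcases le_total 0 x with h | h
  · rw [abs_of_nonneg h] at hx ⊢
    exact abs_of_nonneg (tan_nonneg_of_nonneg_of_le_pi_div_two h hx.le)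
  · rw [abs_of_nonpos h] at hx ⊢
    rw [← abs_neg, ← tan_neg]
    exact abs_of_nonneg (tan_nonneg_of_nonneg_of_le_pi_div_two (neg_nonneg.2 h) hx.le)

lemma Real.tan_le_inv_pi_div_two_sub {x : ℝ} (h0 : 0 ≤ x) (hx : x < π / 2) :
    tan x ≤ (π / 2 - x)⁻¹ := by
  rcases h0.eq_or_lt with rfl | h0
  · simp only [tan_zero, sub_zero]
    positivity
  · have hcot := le_tan (x := π / 2 - x) (by linarith) (by linarith)
    rw [tan_pi_div_two_sub] at hcot
    exact (le_inv_comm₀ (by linarith) (tan_pos_of_pos_of_lt_pi_div_two h0 hx)).1 hcot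

lemma norm_exp_mul_log_I_mul_sq_le (β : ℂ) {t : ℝ} (ht : t ≠ 0) :
    ‖Complex.exp (β * Complex.log (Complex.I * t))‖ ^ 2 ≤
      exp (π * |β.im|) * |t| ^ (2 * β.re) := by
  have hz : Complex.I * t ≠ 0 := mul_ne_zero Complex.I_ne_zero (by exact_mod_cast ht)
  have hnorm : ‖Complex.I * t‖ = |t| := by simp
  have harg : |Complex.arg (Complex.I * t)| ≤ π / 2 :=
    Complex.abs_arg_le_pi_div_two_iff.2 (by simp)
  rw [mul_comm, ← Complex.cpow_def_of_ne_zero hz, Complex.norm_cpow_of_ne_zero hz, hnorm,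
    div_pow, div_le_iff₀ (by positivity), ← exp_nat_mul,
    ← rpow_natCast, ← rpow_mul (abs_nonneg t), mul_comm β.re]
  have hexp : -(π * |β.im|) ≤ ((2 : ℕ) : ℝ) * (Complex.arg (Complex.I * t) * β.im) := by
    have := mul_le_mul_of_nonneg_right harg (abs_nonneg β.im)
    rw [← abs_mul] at this
    push_cast
    linarith [neg_abs_le (Complex.arg (Complex.I * t) * β.im)]
  calc |t| ^ (2 * β.re) = exp (π * |β.im|) * |t| ^ (2 * β.re) * exp (-(π * |β.im|)) := by
        rw [mul_right_comm, ← exp_add, add_neg_cancel, exp_zero, one_mul]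
    _ ≤ _ := by gcongr

lemma norm_exp_mul_log_I_mul_tan_sq_le (β : ℂ) {φ : ℝ} (hφ : |φ| < π / 2) (hφ0 : φ ≠ 0) :
    ‖Complex.exp (β * Complex.log (Complex.I * tan φ))‖ ^ 2 ≤
      exp (π * |β.im|) * ((π / 2 - |φ|) ^ (-(2 * |β.re|)) + |φ| ^ (-(2 * |β.re|))) := by
  have hφpos : 0 < |φ| := abs_pos.2 hφ0
  have htan : |tan φ| = tan |φ| := abs_tan_eq_tan_abs hφ
  have htpos : 0 < |tan φ| := htan ▸ tan_pos_of_pos_of_lt_pi_div_two hφpos hφ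
  have hlow : |φ| ≤ |tan φ| := htan ▸ le_tan hφpos.le hφ
  have hup : |tan φ| ≤ (π / 2 - |φ|)⁻¹ := htan ▸ tan_le_inv_pi_div_two_sub hφpos.le hφ
  have hsplit := rpow_le_rpow_abs_add_rpow_neg_abs htpos (2 * β.re)
  rw [abs_mul, abs_two] at hsplit
  calc ‖Complex.exp (β * Complex.log (Complex.I * tan φ))‖ ^ 2
      ≤ exp (π * |β.im|) * |tan φ| ^ (2 * β.re) :=
        norm_exp_mul_log_I_mul_sq_le β (abs_pos.1 htpos)
    _ ≤ exp (π * |β.im|) * (|tan φ| ^ (2 * |β.re|) + |tan φ| ^ (-(2 * |β.re|))) := by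
        gcongr
    _ ≤ exp (π * |β.im|) * ((π / 2 - |φ|) ^ (-(2 * |β.re|)) + |φ| ^ (-(2 * |β.re|))) := by
        gcongr _ * (?_ + ?_)
        · rw [rpow_neg (by linarith), ← inv_rpow (by linarith)]
          exact rpow_le_rpow (abs_nonneg _) hup (by positivity)
        · exact rpow_le_rpow_of_nonpos hφpos hlow (by linarith [abs_nonneg β.re])

lemma integral_norm_exp_mul_log_I_mul_tan_sq_le {β : ℂ} (hβ : |β.re| < 1 / 2) :
    ∫ φ in -(π / 2)..π / 2, ‖Complex.exp (β * Complex.log (Complex.I * tan φ))‖ ^ 2 ≤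
      exp (π * |β.im|) * (4 * (π / 2) ^ (1 - 2 * |β.re|) / (1 - 2 * |β.re|)) := by
  set r := -(2 * |β.re|)
  have hr : -1 < r := by linarith
  have hk := intervalIntegrable_sub_rpow_add_rpow (s := π / 2) hr
  have hs : (0 : ℝ) ≤ π / 2 := by positivity
  rw [show 4 * (π / 2) ^ (1 - 2 * |β.re|) / (1 - 2 * |β.re|) =
      2 * (2 * (π / 2) ^ (r + 1) / (r + 1)) by rw [neg_add_eq_sub]; ring,
    ← integral_sub_rpow_add_rpow hr, ← smul_eq_mul (2 : ℝ),
    ← intervalIntegral.integral_comp_abs_symm hk hs, ← intervalIntegral.integral_const_mul,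
    intervalIntegral.integral_of_le (by linarith), intervalIntegral.integral_of_le (by linarith)]
  refine integral_mono_of_nonneg (ae_of_all _ fun _ => by positivity)
    ((hk.comp_abs hs).const_mul _).1 ?_
  filter_upwards [ae_restrict_mem measurableSet_Ioc, ae_restrict_of_ae (volume.ae_ne 0),
    ae_restrict_of_ae (volume.ae_ne (π / 2))] with φ hφ hφ0 hφπ
  exact norm_exp_mul_log_I_mul_tan_sq_le β
    (abs_lt.2 ⟨hφ.1, hφ.2.lt_of_ne hφπ⟩) hφ0

/-- the squared `L²`-norm of the boundary values of the Szegő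
    function is bounded:
    `(1/(2π)) ∫_{−π/2}^{3π/2} |exp(β·Log(i·tan(θ/2 − π/4)))|² dθ
       ≤ 3·e^{π|Im β|}·π^{1 − 2|Re β|}/(1 − 2|Re β|)`. -/
theorem szego_L2_bound (lam : ℂ)
    (hlam : lam ∉ (Complex.ofReal '' Set.Icc (-1 : ℝ) 1)) :
    (1 / (2 * Real.pi)) *
        ∫ θ in (-Real.pi / 2)..(3 * Real.pi / 2),
          (‖Complex.exp (betaFn lam *
            Complex.log (Complex.I * (Real.tan (θ / 2 - Real.pi / 4) : ℂ)))‖) ^ 2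
      ≤ 3 * Real.exp (Real.pi * |(betaFn lam).im|) *
          Real.pi ^ ((1 : ℝ) - 2 * |(betaFn lam).re|) / (1 - 2 * |(betaFn lam).re|) := by
  set β := betaFn lam
  have hβ := abs_re_betaFn_lt_half hlam
  rw [intervalIntegral.integral_comp_div_sub
      (fun φ => ‖Complex.exp (β * Complex.log (Complex.I * tan φ))‖ ^ 2) two_ne_zero,
    show -π / 2 / 2 - π / 4 = -(π / 2) by ring, show 3 * π / 2 / 2 - π / 4 = π / 2 by ring,
    smul_eq_mul]
  have hd : 0 < 1 - 2 * |β.re| := by linarith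
  calc 1 / (2 * π) * (2 * ∫ φ in -(π / 2)..π / 2,
          ‖Complex.exp (β * Complex.log (Complex.I * tan φ))‖ ^ 2)
      ≤ 1 / (2 * π) * (2 * (exp (π * |β.im|) *
          (4 * (π / 2) ^ (1 - 2 * |β.re|) / (1 - 2 * |β.re|)))) := by
        gcongr
        exact integral_norm_exp_mul_log_I_mul_tan_sq_le hβ
    _ = 4 / π * exp (π * |β.im|) * (π / 2) ^ (1 - 2 * |β.re|) / (1 - 2 * |β.re|) := by
        field_simp
    _ ≤ 3 * exp (π * |β.im|) * π ^ (1 - 2 * |β.re|) / (1 - 2 * |β.re|) := by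
        gcongr ?_ * _ * ?_ / _
        · rw [div_le_iff₀ pi_pos]
          linarith [pi_gt_three]
        · exact rpow_le_rpow (by positivity) (by linarith [pi_pos]) hd.le
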